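/- arXiv:2601.21865 — 2 statements merged into one kernel-verified Lean document; each statement's English description precedes it below -/
import Mathlib

section
/- Let k ≥ 1 and let f_1, g_1, …, f_k, g_k : ℝ → ℝ be differentiable functions with f_i'(y) ≤ 0 and g_i'(y) ≤ 0 for all i and all y. Define π_b(y) = φ_{1,b} ∘ g_1 ∘ φ_{2,b} ∘ g_2 ∘ ⋯ ∘ φ_{k,b} ∘ g_k (y), where φ_{i,b}(y) = f_i(y − b) + b. Then for every y and b, the partial derivative ∂π_b(y)/∂b is at least 1. -/
/-! Differentiating one step `y ↦ f_k(g_k(y) - b) + b` in `b` turns a derivative `d` of the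
previous composite into `f_k' · (g_k' · d - 1) + 1`. Both factors of the product are `≤ 0` as
soon as `d ≥ 0`, so the new derivative is `≥ 1`; starting from `d = 0` for the identity map,
every composite of at least one step has derivative `≥ 1` in `b`. -/

/-- The perturbed first return map: composition of the `k` steps
`y ↦ φ_{i,b}(g_i(y)) = f_i(g_i(y) - b) + b`. -/
noncomputable def piMap (f g : ℕ → ℝ → ℝ) (b : ℝ) : ℕ → ℝ → ℝ
  | 0, y => y
  | k + 1, y => f k (g k (piMap f g b k y) - b) + b

lemma one_le_mul_mul_sub_one_add_one {p q d : ℝ} (hp : p ≤ 0) (hq : q ≤ 0) (hd : 0 ≤ d) :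
    1 ≤ p * (q * d - 1) + 1 := by
  have hqd : q * d - 1 ≤ 0 := by nlinarith
  nlinarith

section

variable {f g : ℕ → ℝ → ℝ} {k : ℕ} {y b d : ℝ}

lemma hasDerivAt_piMap_succ
    (hfk : DifferentiableAt ℝ (f k) (g k (piMap f g b k y) - b))
    (hgk : DifferentiableAt ℝ (g k) (piMap f g b k y))
    (hd : HasDerivAt (fun b' => piMap f g b' k y) d b) :
    HasDerivAt (fun b' => piMap f g b' (k + 1) y)
      (deriv (f k) (g k (piMap f g b k y) - b) *
        (deriv (g k) (piMap f g b k y) * d - 1) + 1) b := by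
  have hinner : HasDerivAt (fun b' => g k (piMap f g b' k y) - b')
      (deriv (g k) (piMap f g b k y) * d - 1) b :=
    (hgk.hasDerivAt.comp b hd).sub (hasDerivAt_id' b)
  exact (HasDerivAt.comp b (h := fun b' => g k (piMap f g b' k y) - b') hfk.hasDerivAt hinner).add
    (hasDerivAt_id' b)

lemma exists_hasDerivAt_piMap_succ_one_le_of_nonneg (hf : ∀ i, Differentiable ℝ (f i))
    (hg : ∀ i, Differentiable ℝ (g i))
    (hf' : ∀ i x, deriv (f i) x ≤ 0) (hg' : ∀ i x, deriv (g i) x ≤ 0)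
    (hd : HasDerivAt (fun b' => piMap f g b' k y) d b) (hd0 : 0 ≤ d) :
    ∃ d', HasDerivAt (fun b' => piMap f g b' (k + 1) y) d' b ∧ 1 ≤ d' :=
  ⟨_, hasDerivAt_piMap_succ (hf k _) (hg k _) hd,
    one_le_mul_mul_sub_one_add_one (hf' k _) (hg' k _) hd0⟩

lemma exists_hasDerivAt_piMap_succ_one_le (hf : ∀ i, Differentiable ℝ (f i))
    (hg : ∀ i, Differentiable ℝ (g i))
    (hf' : ∀ i x, deriv (f i) x ≤ 0) (hg' : ∀ i x, deriv (g i) x ≤ 0) (k : ℕ) :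
    ∃ d, HasDerivAt (fun b' => piMap f g b' (k + 1) y) d b ∧ 1 ≤ d := by
  induction k with
  | zero =>
    have hid : HasDerivAt (fun b' => piMap f g b' 0 y) 0 b := hasDerivAt_const b y
    exact exists_hasDerivAt_piMap_succ_one_le_of_nonneg hf hg hf' hg' hid le_rfl
  | succ k ih =>
    obtain ⟨d, hd, hd1⟩ := ih
    exact exists_hasDerivAt_piMap_succ_one_le_of_nonneg hf hg hf' hg' hd (by linarith)

end

theorem stmt_6 (k : ℕ) (hk : 1 ≤ k) (f g : ℕ → ℝ → ℝ)
    (hf : ∀ i, Differentiable ℝ (f i)) (hg : ∀ i, Differentiable ℝ (g i))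
    (hf' : ∀ i y, deriv (f i) y ≤ 0) (hg' : ∀ i y, deriv (g i) y ≤ 0) :
    ∀ y b : ℝ, 1 ≤ deriv (fun b' => piMap f g b' k y) b := by
  intro y b
  obtain ⟨j, rfl⟩ := Nat.exists_eq_add_of_le' hk
  obtain ⟨d, hd, hd1⟩ := exists_hasDerivAt_piMap_succ_one_le hf hg hf' hg' (y := y) (b := b) j
  rwa [hd.deriv]
end

section
/- Define φ : ℝ → ℝ by φ(y) = y² − 2, ξ : ℝ₊ → ℝ₊ by ξ(y) = 2 + √y, and for k ≥ 2 set I_k = [0, √(2 − √(ξ^[k−2](3)))]. Then for every k ≥ 2, every y ∈ I_k, and every i ∈ {1, …, k}, one has φ^[i](y) ≠ 0. -/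
theorem stmt_11 (φ ξ : ℝ → ℝ)
    (hφ : ∀ y, φ y = y ^ 2 - 2) (hξ : ∀ y, ξ y = 2 + Real.sqrt y) :
    ∀ k : ℕ, 2 ≤ k →
      ∀ y ∈ Set.Icc (0 : ℝ) (Real.sqrt (2 - Real.sqrt (ξ^[k - 2] 3))),
        ∀ i : ℕ, 1 ≤ i → i ≤ k → φ^[i] y ≠ 0 := by
  have hb : ∀ m : ℕ, 3 ≤ ξ^[m] 3 ∧ ξ^[m] 3 ≤ 4 := by
    intro m
    induction m with
    | zero => norm_num
    | succ n ih =>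
      rw [Function.iterate_succ_apply', hξ]
      have h0 : (0:ℝ) ≤ ξ^[n] 3 := by linarith [ih.1]
      have h1 : (1:ℝ) ≤ Real.sqrt (ξ^[n] 3) := by
        rw [show (1:ℝ) = Real.sqrt 1 by simp]
        exact Real.sqrt_le_sqrt (by linarith [ih.1])
      have h2 : Real.sqrt (ξ^[n] 3) ≤ 2 := by
        rw [show (2:ℝ) = Real.sqrt 4 by
          rw [show (4:ℝ) = 2^2 by norm_num, Real.sqrt_sq (by norm_num)]]
        exact Real.sqrt_le_sqrt ih.2
      constructor <;> linarith
  have L : ∀ n : ℕ, ∀ t : ℝ, ξ^[n] 3 - 2 ≤ t → t ≤ 2 → ∀ j ≤ n,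
      1 ≤ φ^[j] t ∧ φ^[j] t ≤ 2 := by
    intro n
    induction n with
    | zero =>
      intro t ht1 ht2 j hj
      interval_cases j
      simp only [Function.iterate_zero_apply] at *
      exact ⟨by linarith, ht2⟩
    | succ n ih =>
      intro t ht1 ht2 j hj
      have h0 : (0:ℝ) ≤ ξ^[n] 3 := by linarith [(hb n).1]
      have hts : Real.sqrt (ξ^[n] 3) ≤ t := by
        rw [Function.iterate_succ_apply', hξ] at ht1; linarith
      have h1 : (1:ℝ) ≤ Real.sqrt (ξ^[n] 3) := by
        rw [show (1:ℝ) = Real.sqrt 1 by simp]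
        exact Real.sqrt_le_sqrt (by linarith [(hb n).1])
      match j with
      | 0 => refine ⟨by simpa using le_trans h1 hts, by simpa using ht2⟩
      | (j+1) =>
        rw [Function.iterate_succ_apply]
        have hsq : ξ^[n] 3 ≤ t ^ 2 := by
          nlinarith [Real.sq_sqrt h0, Real.sqrt_nonneg (ξ^[n] 3)]
        exact ih (φ t) (by rw [hφ]; linarith) (by rw [hφ]; nlinarith)
          j (by omega)
  intro k hk y hy i hi1 hik
  obtain ⟨m, rfl⟩ : ∃ m, k = m + 2 := ⟨k - 2, by omega⟩
  simp only [Nat.add_sub_cancel] at hy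
  obtain ⟨hy0, hy2⟩ := hy
  have hbm := hb m
  have h0 : (0:ℝ) ≤ ξ^[m] 3 := by linarith [hbm.1]
  have h1 : (1:ℝ) ≤ Real.sqrt (ξ^[m] 3) := by
    rw [show (1:ℝ) = Real.sqrt 1 by simp]
    exact Real.sqrt_le_sqrt (by linarith [hbm.1])
  have h2 : Real.sqrt (ξ^[m] 3) ≤ 2 := by
    rw [show (2:ℝ) = Real.sqrt 4 by
      rw [show (4:ℝ) = 2^2 by norm_num, Real.sqrt_sq (by norm_num)]]
    exact Real.sqrt_le_sqrt hbm.2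
  have hysq : y ^ 2 ≤ 2 - Real.sqrt (ξ^[m] 3) := by
    have := Real.sq_sqrt (show (0:ℝ) ≤ 2 - Real.sqrt (ξ^[m] 3) by linarith)
    nlinarith [Real.sqrt_nonneg (2 - Real.sqrt (ξ^[m] 3))]
  have hz1a : φ y ≤ -Real.sqrt (ξ^[m] 3) := by rw [hφ]; linarith
  have hz1b : -2 ≤ φ y := by rw [hφ]; nlinarith
  match i, hi1 with
  | 1, _ =>
    have : φ^[1] y ≤ -1 := by simpa using le_trans hz1a (by linarith)
    intro h; rw [h] at this; linarith
  | (i+2), _ =>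
    have hz2a : ξ^[m] 3 - 2 ≤ φ^[2] (y) := by
      have hsq : ξ^[m] 3 ≤ (φ y) ^ 2 := by
        nlinarith [Real.sq_sqrt h0, Real.sqrt_nonneg (ξ^[m] 3)]
      show ξ^[m] 3 - 2 ≤ φ (φ y)
      rw [hφ (φ y)]; linarith
    have hz2b : φ^[2] y ≤ 2 := by
      show φ (φ y) ≤ 2
      rw [hφ (φ y)]; nlinarith
    have key := L m (φ^[2] y) hz2a hz2b i (by omega)
    have : φ^[i+2] y = φ^[i] (φ^[2] y) := by
      rw [← Function.iterate_add_apply]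
    rw [this]
    intro h; rw [h] at key; linarith [key.1]
end
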